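/- Let f : [0,θ] → ℝ be bounded and measurable. If f is non-decreasing, then Uf is non-increasing on [0,θ]; if f is non-increasing, then Uf is non-decreasing on [0,θ]. -/
import Mathlib


open MeasureTheory Real Set

/-- θ = 1/√m. -/
noncomputable def theta (m : ℕ) : ℝ := 1 / Real.sqrt m

/-- u_i(x) = 1/(iθ + x). -/
noncomputable def uMap (m i : ℕ) (x : ℝ) : ℝ := 1 / (i * theta m + x)

/-- P_i(x) = (1+θx)/((x+iθ)(x+(i+1)θ)). -/
noncomputable def Pfun (m i : ℕ) (x : ℝ) : ℝ :=
  (1 + theta m * x) / ((x + i * theta m) * (x + (i + 1) * theta m))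

/-- The Perron-Frobenius operator Uf(x) = Σ_{i≥m} P_i(x)·f(u_i(x)). -/
noncomputable def Uop (m : ℕ) (f : ℝ → ℝ) (x : ℝ) : ℝ :=
  ∑' i : ℕ, Pfun m (i + m) x * f (uMap m (i + m) x)

/-- Tail function T_j(z) = (1+θz)/(θ(z+jθ)), satisfying P_j = T_j - T_{j+1}. -/
noncomputable def Tfun (m j : ℕ) (z : ℝ) : ℝ :=
  (1 + theta m * z) / (theta m * (z + j * theta m))

section Aux

variable {m : ℕ}

lemma theta_pos' (hm : 2 ≤ m) : 0 < theta m := by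
  have h0 : (0:ℝ) < m := by exact_mod_cast Nat.lt_of_lt_of_le (by norm_num) hm
  exact one_div_pos.2 (Real.sqrt_pos.2 h0)

lemma theta_sq' (hm : 2 ≤ m) : (m:ℝ) * (theta m * theta m) = 1 := by
  have h0 : (0:ℝ) ≤ m := by positivity
  have h0' : (0:ℝ) < m := by exact_mod_cast Nat.lt_of_lt_of_le (by norm_num) hm
  rw [theta, div_mul_div_comm, Real.mul_self_sqrt h0]
  field_simp

lemma tele' (hm : 2 ≤ m) (i : ℕ) (z : ℝ) (hz : 0 ≤ z) :
    Pfun m (i+m) z = Tfun m (i+m) z - Tfun m (i+m+1) z := by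
  have hθ := theta_pos' hm
  have hj : (1:ℝ) ≤ ((i+m : ℕ):ℝ) := by exact_mod_cast (by omega : 1 ≤ i + m)
  have h1 : 0 < z + ((i+m:ℕ):ℝ) * theta m := by nlinarith
  have h2 : 0 < z + (((i+m:ℕ):ℝ) + 1) * theta m := by nlinarith
  unfold Pfun Tfun
  push_cast at h1 h2 ⊢
  field_simp
  ring

lemma Tfun_base (hm : 2 ≤ m) (z : ℝ) (hz : 0 ≤ z) : Tfun m m z = 1 := by
  have hθ := theta_pos' hm
  have hθm := theta_sq' hm
  have hden : theta m * (z + m * theta m) = 1 + theta m * z := by linear_combination hθm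
  rw [Tfun, hden, div_self (by nlinarith)]

lemma Tfun_nonneg (hm : 2 ≤ m) (N : ℕ) (z : ℝ) (hz : 0 ≤ z) : 0 ≤ Tfun m (N+m) z := by
  have hθ := theta_pos' hm
  apply div_nonneg (by nlinarith)
  exact mul_nonneg hθ.le (add_nonneg hz (mul_nonneg (by positivity) hθ.le))

lemma Tfun_mono (hm : 2 ≤ m) (N : ℕ) (z z' : ℝ) (hz : 0 ≤ z) (hzz' : z ≤ z') :
    Tfun m (N+m) z ≤ Tfun m (N+m) z' := by
  have hθ := theta_pos' hm
  have hθm := theta_sq' hm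
  have hmj : (m:ℝ) ≤ ((N+m:ℕ):ℝ) := by exact_mod_cast (by omega : m ≤ N + m)
  have h1 : 1 ≤ ((N+m:ℕ):ℝ) * (theta m * theta m) := by nlinarith [sq_nonneg (theta m)]
  have hj : (1:ℝ) ≤ ((N+m:ℕ):ℝ) := by exact_mod_cast (by omega : 1 ≤ N + m)
  have hd1 : 0 < theta m * (z + ((N+m:ℕ):ℝ) * theta m) := by nlinarith
  have hd2 : 0 < theta m * (z' + ((N+m:ℕ):ℝ) * theta m) := by nlinarith
  rw [Tfun, Tfun, div_le_div_iff₀ hd1 hd2]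
  nlinarith [mul_nonneg (mul_nonneg hθ.le (sub_nonneg.2 hzz')) (sub_nonneg.2 h1)]

lemma Tfun_le_bound (hm : 2 ≤ m) (N : ℕ) (z : ℝ) (hz : 0 ≤ z) :
    Tfun m (N+m) z ≤ (1 + theta m * z) * m / ((N:ℝ) + m) := by
  have hθ := theta_pos' hm
  have hθm := theta_sq' hm
  have hm0 : (0:ℝ) < m := by exact_mod_cast Nat.lt_of_lt_of_le (by norm_num) hm
  have hden : (0:ℝ) < ((N:ℝ) + m) := by positivity
  have hd1 : 0 < theta m * (z + ((N+m:ℕ):ℝ) * theta m) := by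
    have hj : (1:ℝ) ≤ ((N+m:ℕ):ℝ) := by exact_mod_cast (by omega : 1 ≤ N + m)
    nlinarith
  rw [Tfun, div_le_div_iff₀ hd1 hden]
  have hcast : ((N+m:ℕ):ℝ) = (N:ℝ) + m := by push_cast; ring
  rw [hcast]
  have key : (1 + theta m * z) * (m:ℝ) * (theta m * (z + ((N:ℝ) + m) * theta m))
      = (1 + theta m * z) * ((N:ℝ) + m) + (1 + theta m * z) * ((m:ℝ) * (theta m * z)) := by
    linear_combination ((1 + theta m * z) * ((N:ℝ) + m)) * hθm
  have hpos : 0 ≤ (1 + theta m * z) * ((m:ℝ) * (theta m * z)) := by positivity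
  nlinarith [key, hpos]

lemma Tfun_tendsto (hm : 2 ≤ m) (z : ℝ) (hz : 0 ≤ z) :
    Filter.Tendsto (fun N : ℕ => Tfun m (N+m) z) Filter.atTop (nhds 0) := by
  apply squeeze_zero (fun N => Tfun_nonneg hm N z hz) (fun N => Tfun_le_bound hm N z hz)
  have h : Filter.Tendsto (fun n : ℕ => (1 + theta m * z) * m / (n:ℝ)) Filter.atTop (nhds 0) :=
    tendsto_const_div_atTop_nhds_zero_nat _
  have h2 : Filter.Tendsto (fun N : ℕ => N + m) Filter.atTop Filter.atTop :=
    Filter.tendsto_add_atTop_nat m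
  have h3 : (fun N : ℕ => (1 + theta m * z) * m / ((N:ℝ) + m))
      = (fun n : ℕ => (1 + theta m * z) * m / (n : ℝ)) ∘ (fun N => N + m) := by
    funext N
    simp only [Function.comp]
    norm_cast
  rw [h3]
  exact h.comp h2

lemma uMap_mem (hm : 2 ≤ m) (i : ℕ) (z : ℝ) (hz : z ∈ Set.Icc 0 (theta m)) :
    uMap m (i+m) z ∈ Set.Icc 0 (theta m) := by
  have hθ := theta_pos' hm
  have hθm := theta_sq' hm
  obtain ⟨hz0, hz1⟩ := hz
  have hmj : (m:ℝ) ≤ ((i+m:ℕ):ℝ) := by exact_mod_cast (by omega : m ≤ i + m)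
  have hd : 0 < ((i+m:ℕ):ℝ) * theta m + z := by nlinarith [sq_nonneg (theta m), mul_pos hθ hθ]
  constructor
  · exact le_of_lt (by rw [uMap]; positivity)
  · rw [uMap, div_le_iff₀ hd]
    nlinarith [sq_nonneg (theta m)]

lemma uMap_anti_z (hm : 2 ≤ m) (i : ℕ) (z z' : ℝ) (hz : 0 ≤ z) (hzz' : z ≤ z') :
    uMap m (i+m) z' ≤ uMap m (i+m) z := by
  have hθ := theta_pos' hm
  have hj : (1:ℝ) ≤ ((i+m:ℕ):ℝ) := by exact_mod_cast (by omega : 1 ≤ i + m)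
  have hd : 0 < ((i+m:ℕ):ℝ) * theta m + z := by nlinarith
  exact one_div_le_one_div_of_le hd (by linarith)

lemma uMap_anti_i (hm : 2 ≤ m) (i : ℕ) (z : ℝ) (hz : 0 ≤ z) :
    uMap m (i+1+m) z ≤ uMap m (i+m) z := by
  have hθ := theta_pos' hm
  have hj : (1:ℝ) ≤ ((i+m:ℕ):ℝ) := by exact_mod_cast (by omega : 1 ≤ i + m)
  have hd : 0 < ((i+m:ℕ):ℝ) * theta m + z := by nlinarith
  have hc : ((i+m:ℕ):ℝ) ≤ ((i+1+m:ℕ):ℝ) := by exact_mod_cast (by omega : i+m ≤ i+1+m)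
  exact one_div_le_one_div_of_le hd (by nlinarith)

lemma Pfun_nonneg (hm : 2 ≤ m) (i : ℕ) (z : ℝ) (hz : 0 ≤ z) : 0 ≤ Pfun m (i+m) z := by
  have hθ := theta_pos' hm
  have hj : (1:ℝ) ≤ ((i+m:ℕ):ℝ) := by exact_mod_cast (by omega : 1 ≤ i + m)
  have h1 : 0 < z + ((i+m:ℕ):ℝ) * theta m := by nlinarith
  have h2 : 0 < z + (((i+m:ℕ):ℝ) + 1) * theta m := by nlinarith
  exact div_nonneg (by nlinarith) (le_of_lt (mul_pos h1 h2))

lemma Pfun_sum (hm : 2 ≤ m) (z : ℝ) (hz : 0 ≤ z) (N : ℕ) :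
    ∑ i ∈ Finset.range N, Pfun m (i+m) z = 1 - Tfun m (N+m) z := by
  have h := Finset.sum_range_sub' (f := fun i => Tfun m (i+m) z) N
  calc ∑ i ∈ Finset.range N, Pfun m (i+m) z
      = ∑ i ∈ Finset.range N, (Tfun m (i+m) z - Tfun m (i+1+m) z) := by
        refine Finset.sum_congr rfl (fun i _ => ?_)
        rw [tele' hm i z hz, show i+m+1 = i+1+m from by omega]
    _ = Tfun m (0+m) z - Tfun m (N+m) z := h
    _ = 1 - Tfun m (N+m) z := by rw [show (0:ℕ)+m = m from by omega, Tfun_base hm z hz]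

lemma Pfun_summable (hm : 2 ≤ m) (z : ℝ) (hz : 0 ≤ z) :
    Summable (fun i => Pfun m (i+m) z) := by
  apply summable_of_sum_range_le (fun i => Pfun_nonneg hm i z hz) (c := 1)
  intro n
  rw [Pfun_sum hm z hz n]
  linarith [Tfun_nonneg hm n z hz]

lemma Pfun_mul_summable (hm : 2 ≤ m) (z : ℝ) (hz : 0 ≤ z) (C : ℝ) (g : ℕ → ℝ)
    (hg : ∀ i, |g i| ≤ C) : Summable (fun i => Pfun m (i+m) z * g i) := by
  apply Summable.of_abs
  have hle : ∀ i, |Pfun m (i+m) z * g i| ≤ C * Pfun m (i+m) z := by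
    intro i
    rw [abs_mul, abs_of_nonneg (Pfun_nonneg hm i z hz)]
    calc Pfun m (i+m) z * |g i| ≤ Pfun m (i+m) z * C :=
          mul_le_mul_of_nonneg_left (hg i) (Pfun_nonneg hm i z hz)
      _ = C * Pfun m (i+m) z := mul_comm _ _
  exact Summable.of_nonneg_of_le (fun i => abs_nonneg _) hle
    ((Pfun_summable hm z hz).mul_left C)

/-- Core lemma: if f is bounded and monotone on [0,θ], then Uop m f is antitone there. -/
lemma Uop_core (m : ℕ) (hm : 2 ≤ m) (f : ℝ → ℝ)
    (hbdd : ∃ C : ℝ, ∀ x ∈ Icc 0 (theta m), |f x| ≤ C)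
    (hf : MonotoneOn f (Icc 0 (theta m))) :
    AntitoneOn (Uop m f) (Icc 0 (theta m)) := by
  obtain ⟨C, hC⟩ := hbdd
  have hθ := theta_pos' hm
  have hC0 : 0 ≤ C := le_trans (abs_nonneg _) (hC 0 ⟨le_refl 0, hθ.le⟩)
  intro x hx y hy hxy
  -- goal: Uop m f y ≤ Uop m f x
  set px : ℕ → ℝ := fun i => Pfun m (i+m) x with hpx
  set py : ℕ → ℝ := fun i => Pfun m (i+m) y with hpy
  set b : ℕ → ℝ := fun i => f (uMap m (i+m) y) with hb
  have hx0 : (0:ℝ) ≤ x := hx.1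
  have hy0 : (0:ℝ) ≤ y := hy.1
  have hbbd : ∀ i, |b i| ≤ C := fun i => hC _ (uMap_mem hm i y hy)
  have hfxbd : ∀ i, |f (uMap m (i+m) x)| ≤ C := fun i => hC _ (uMap_mem hm i x hx)
  have hsum_pxfx : Summable (fun i => px i * f (uMap m (i+m) x)) :=
    Pfun_mul_summable hm x hx0 C _ hfxbd
  have hsum_pxb : Summable (fun i => px i * b i) := Pfun_mul_summable hm x hx0 C b hbbd
  have hsum_pyb : Summable (fun i => py i * b i) := Pfun_mul_summable hm y hy0 C b hbbd
  -- step 1 : ∑ py b ≤ ∑ px b  (Abel summation)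
  have hbmono : ∀ N : ℕ, b (N+1) ≤ b N := by
    intro N
    exact hf (uMap_mem hm (N+1) y hy)
      (uMap_mem hm N y hy) (by simpa using uMap_anti_i hm N y hy0)
  have hS : ∀ N : ℕ, ∑ i ∈ Finset.range N, (px i - py i)
      = Tfun m (N+m) y - Tfun m (N+m) x := by
    intro N
    rw [Finset.sum_sub_distrib, Pfun_sum hm x hx0 N, Pfun_sum hm y hy0 N]
    ring
  have key : ∀ N : ℕ, (∑ i ∈ Finset.range N, (px i - py i)) * b N
      ≤ ∑ i ∈ Finset.range N, (px i - py i) * b i := by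
    intro N
    induction N with
    | zero => simp
    | succ N ih =>
      have hSpos : 0 ≤ ∑ i ∈ Finset.range (N+1), (px i - py i) := by
        rw [hS (N+1)]
        linarith [Tfun_mono hm (N+1) x y hx0 hxy]
      calc (∑ i ∈ Finset.range (N+1), (px i - py i)) * b (N+1)
          ≤ (∑ i ∈ Finset.range (N+1), (px i - py i)) * b N :=
            mul_le_mul_of_nonneg_left (hbmono N) hSpos
        _ = (∑ i ∈ Finset.range N, (px i - py i)) * b N + (px N - py N) * b N := by
            rw [Finset.sum_range_succ]; ring
        _ ≤ ∑ i ∈ Finset.range N, (px i - py i) * b i + (px N - py N) * b N := by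
            linarith [ih]
        _ = ∑ i ∈ Finset.range (N+1), (px i - py i) * b i :=
            (Finset.sum_range_succ _ N).symm
  have hmain : ∀ N : ℕ, ∑ i ∈ Finset.range N, py i * b i
      ≤ (∑ i ∈ Finset.range N, px i * b i) + C * Tfun m (N+m) y := by
    intro N
    have h1 := key N
    have h2 : ∑ i ∈ Finset.range N, (px i - py i) * b i
        = ∑ i ∈ Finset.range N, px i * b i - ∑ i ∈ Finset.range N, py i * b i := by
      rw [← Finset.sum_sub_distrib]
      exact Finset.sum_congr rfl (fun i _ => by ring)
    have h3 := hS N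
    have hSpos : 0 ≤ ∑ i ∈ Finset.range N, (px i - py i) := by
      rw [h3]; linarith [Tfun_mono hm N x y hx0 hxy]
    have hTx : 0 ≤ Tfun m (N+m) x := Tfun_nonneg hm N x hx0
    have hbN : -C ≤ b N := neg_le_of_abs_le (hbbd N)
    have h4 : (∑ i ∈ Finset.range N, (px i - py i)) * (-C)
        ≤ (∑ i ∈ Finset.range N, (px i - py i)) * b N :=
      mul_le_mul_of_nonneg_left hbN hSpos
    have h5 : (∑ i ∈ Finset.range N, (px i - py i)) * C ≤ Tfun m (N+m) y * C := by
      apply mul_le_mul_of_nonneg_right _ hC0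
      rw [h3]; linarith
    nlinarith
  -- take limits
  have hA : Filter.Tendsto (fun N => ∑ i ∈ Finset.range N, py i * b i) Filter.atTop
      (nhds (∑' i, py i * b i)) := hsum_pyb.hasSum.tendsto_sum_nat
  have hB : Filter.Tendsto
      (fun N => (∑ i ∈ Finset.range N, px i * b i) + C * Tfun m (N+m) y) Filter.atTop
      (nhds (∑' i, px i * b i)) := by
    have h1 := hsum_pxb.hasSum.tendsto_sum_nat
    have h2 := (Tfun_tendsto hm y hy0).const_mul C
    have := h1.add h2
    simpa using this
  have step1 : ∑' i, py i * b i ≤ ∑' i, px i * b i :=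
    le_of_tendsto_of_tendsto' hA hB hmain
  -- step 2 : ∑ px b ≤ ∑ px f(u x)
  have step2 : ∑' i, px i * b i ≤ ∑' i, px i * f (uMap m (i+m) x) := by
    apply Summable.tsum_le_tsum _ hsum_pxb hsum_pxfx
    intro i
    apply mul_le_mul_of_nonneg_left _ (Pfun_nonneg hm i x hx0)
    exact hf (uMap_mem hm i y hy) (uMap_mem hm i x hx) (uMap_anti_z hm i x y hx0 hxy)
  calc Uop m f y = ∑' i, py i * b i := rfl
    _ ≤ ∑' i, px i * b i := step1
    _ ≤ ∑' i, px i * f (uMap m (i+m) x) := step2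
    _ = Uop m f x := rfl

end Aux

/-- If f is bounded measurable and non-decreasing then Uf is non-increasing on [0,θ],
and if f is non-increasing then Uf is non-decreasing on [0,θ]. -/
theorem Uop_reverses_monotonicity (m : ℕ) (hm : 2 ≤ m) (hns : ¬ IsSquare m)
    (f : ℝ → ℝ) (hmeas : Measurable f)
    (hbdd : ∃ C : ℝ, ∀ x ∈ Icc 0 (theta m), |f x| ≤ C) :
    (MonotoneOn f (Icc 0 (theta m)) → AntitoneOn (Uop m f) (Icc 0 (theta m))) ∧
    (AntitoneOn f (Icc 0 (theta m)) → MonotoneOn (Uop m f) (Icc 0 (theta m))) := by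
  constructor
  · exact fun hf => Uop_core m hm f hbdd hf
  · intro hf
    obtain ⟨C, hC⟩ := hbdd
    have hneg : AntitoneOn (Uop m (fun t => -f t)) (Icc 0 (theta m)) := by
      apply Uop_core m hm (fun t => -f t) ⟨C, fun x hx => by simpa using hC x hx⟩
      intro a ha b hb hab
      simpa using neg_le_neg (hf ha hb hab)
    have hUneg : ∀ z, Uop m (fun t => -f t) z = - Uop m f z := by
      intro z
      rw [Uop, Uop, ← tsum_neg]
      exact tsum_congr (fun i => by ring)
    intro a ha b hb hab
    have h := hneg ha hb hab
    rw [hUneg, hUneg] at h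
    linarith
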